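/- Let F₂(t) = 1 - e^{-t/2}. For fixed φ ∈ (0, π), the function g(w) = (φ/π)·F₂(w²) + (2/π)·∫_{φ/2}^{π/2} F₂( w²/cos²(θ - φ/2) ) dθ is continuous and strictly increasing on (0, ∞), with g(w) → 0 as w → 0⁺ and g(w) → 1 as w → ∞. Hence for every α ∈ (0,1) there is a unique critical value w with g(w) = 1 - α. -/

import Mathlib

open Set Real Filter Topology

/-- The cdf of the chi-squared distribution with 2 degrees of freedom: `F₂(t) = 1 - e^{-t/2}`. -/
noncomputable def chi2cdf (t : ℝ) : ℝ := 1 - Real.exp (-(t / 2))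

/-- The two-sided coverage probability as a function of the critical value `w`, for a cone
angle `φ`. -/
noncomputable def twoSidedCoverage (φ w : ℝ) : ℝ :=
  (φ / π) * chi2cdf (w ^ 2) +
    (2 / π) * ∫ θ in (φ / 2)..(π / 2), chi2cdf (w ^ 2 / Real.cos (θ - φ / 2) ^ 2)

/-! For `θ ∈ [φ/2, π/2]` we have `0 < cos² (θ - φ/2) ≤ 1`, so the integrand lies
between `F₂(w²)` and `1` and is nondecreasing in `w`, while the weights `φ/π` and
`(2/π)(π/2 - φ/2)` sum to `1`. Hence `g` is squeezed between `F₂(w²)` and `1`, which gives the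
limit at infinity, and it is strictly increasing through its first term. Continuity is dominated
convergence (the integrand is bounded by `1`), and `g 0 = 0`. The critical value then comes from
the intermediate value theorem and strict monotonicity. -/

lemma chi2cdf_zero : chi2cdf 0 = 0 := by simp [chi2cdf]

lemma continuous_chi2cdf : Continuous chi2cdf := by
  unfold chi2cdf; fun_prop

lemma strictMono_chi2cdf : StrictMono chi2cdf := fun s t hst => by
  have : Real.exp (-(t / 2)) < Real.exp (-(s / 2)) := Real.exp_lt_exp.2 (by linarith)
  simp only [chi2cdf]; linarith

lemma monotone_chi2cdf : Monotone chi2cdf := strictMono_chi2cdf.monotone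

lemma chi2cdf_lt_one (t : ℝ) : chi2cdf t < 1 := by
  simp only [chi2cdf]; linarith [Real.exp_pos (-(t / 2))]

lemma chi2cdf_nonneg {t : ℝ} (ht : 0 ≤ t) : 0 ≤ chi2cdf t :=
  chi2cdf_zero ▸ monotone_chi2cdf ht

lemma tendsto_chi2cdf_atTop : Tendsto chi2cdf atTop (𝓝 1) := by
  have hexp : Tendsto (fun t : ℝ => Real.exp (-(t / 2))) atTop (𝓝 0) :=
    Real.tendsto_exp_atBot.comp
      (tendsto_neg_atTop_atBot.comp (tendsto_id.atTop_div_const (by norm_num)))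
  have h := (tendsto_const_nhds (x := (1 : ℝ))).sub hexp
  rwa [sub_zero] at h

lemma norm_chi2cdf_sq_div_le_one (w : ℝ) {c : ℝ} (hc : 0 ≤ c) :
    ‖chi2cdf (w ^ 2 / c)‖ ≤ 1 := by
  have hnonneg := chi2cdf_nonneg (by positivity : 0 ≤ w ^ 2 / c)
  rw [Real.norm_of_nonneg hnonneg]
  exact (chi2cdf_lt_one _).le

section IntegralTerm

variable {c : ℝ → ℝ} {a b : ℝ}

lemma intervalIntegrable_chi2cdf_sq_div (hc : Measurable c) (hc0 : ∀ θ, 0 ≤ c θ) (w : ℝ) :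
    IntervalIntegrable (fun θ => chi2cdf (w ^ 2 / c θ)) MeasureTheory.volume a b :=
  intervalIntegrable_const.mono_fun'
    ((continuous_chi2cdf.measurable.comp (measurable_const.div hc)).aestronglyMeasurable)
    (Eventually.of_forall fun θ => norm_chi2cdf_sq_div_le_one w (hc0 θ))

lemma continuous_integral_chi2cdf_sq_div (hc : Measurable c) (hc0 : ∀ θ, 0 ≤ c θ) :
    Continuous fun w => ∫ θ in a..b, chi2cdf (w ^ 2 / c θ) :=
  intervalIntegral.continuous_of_dominated_interval (bound := fun _ => 1)
    (fun _ => (continuous_chi2cdf.measurable.comp (measurable_const.div hc)).aestronglyMeasurable)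
    (fun w => Eventually.of_forall fun θ _ => norm_chi2cdf_sq_div_le_one w (hc0 θ))
    intervalIntegrable_const
    (Eventually.of_forall fun _ _ => continuous_chi2cdf.comp (by fun_prop))

lemma monotoneOn_integral_chi2cdf_sq_div (hc : Measurable c) (hc0 : ∀ θ, 0 ≤ c θ)
    (hab : a ≤ b) :
    MonotoneOn (fun w => ∫ θ in a..b, chi2cdf (w ^ 2 / c θ)) (Ici 0) :=
  fun _ hv _ _ hvw =>
    intervalIntegral.integral_mono_on hab (intervalIntegrable_chi2cdf_sq_div hc hc0 _)
      (intervalIntegrable_chi2cdf_sq_div hc hc0 _) fun θ _ =>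
      monotone_chi2cdf (div_le_div_of_nonneg_right (pow_le_pow_left₀ hv hvw 2) (hc0 θ))

lemma integral_chi2cdf_sq_div_le (hc : Measurable c) (hc0 : ∀ θ, 0 ≤ c θ) (hab : a ≤ b)
    (w : ℝ) :
    ∫ θ in a..b, chi2cdf (w ^ 2 / c θ) ≤ b - a := by
  simpa using intervalIntegral.integral_mono_on hab (intervalIntegrable_chi2cdf_sq_div hc hc0 w)
    (intervalIntegrable_const (c := (1 : ℝ))) fun θ _ => (chi2cdf_lt_one _).le

lemma mul_chi2cdf_sq_le_integral (hc : Measurable c) (hc0 : ∀ θ, 0 ≤ c θ)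
    (hc1 : ∀ θ ∈ Icc a b, c θ ∈ Ioc 0 1) (hab : a ≤ b) (w : ℝ) :
    (b - a) * chi2cdf (w ^ 2) ≤ ∫ θ in a..b, chi2cdf (w ^ 2 / c θ) := by
  simpa using intervalIntegral.integral_mono_on hab intervalIntegrable_const
    (intervalIntegrable_chi2cdf_sq_div hc hc0 w) fun θ hθ =>
      monotone_chi2cdf (le_div_self (sq_nonneg w) (hc1 θ hθ).1 (hc1 θ hθ).2)

end IntegralTerm

lemma cos_sub_half_sq_mem_Ioc {φ θ : ℝ} (hφ : 0 < φ) (hθ : θ ∈ Icc (φ / 2) (π / 2)) :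
    Real.cos (θ - φ / 2) ^ 2 ∈ Ioc 0 1 :=
  ⟨pow_pos (Real.cos_pos_of_mem_Ioo ⟨by linarith [hθ.1, pi_pos], by linarith [hθ.2]⟩) 2,
    Real.cos_sq_le_one _⟩

lemma continuous_twoSidedCoverage (φ : ℝ) : Continuous (twoSidedCoverage φ) :=
  (continuous_const.mul (continuous_chi2cdf.comp (continuous_pow 2))).add
    (continuous_const.mul (continuous_integral_chi2cdf_sq_div (by fun_prop) fun _ => sq_nonneg _))

lemma twoSidedCoverage_zero (φ : ℝ) : twoSidedCoverage φ 0 = 0 := by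
  simp [twoSidedCoverage, chi2cdf_zero]

lemma tendsto_twoSidedCoverage_nhdsGT_zero (φ : ℝ) :
    Tendsto (twoSidedCoverage φ) (𝓝[>] 0) (𝓝 0) :=
  ((continuous_twoSidedCoverage φ).tendsto' 0 0 (twoSidedCoverage_zero φ)).mono_left
    nhdsWithin_le_nhds

lemma strictMonoOn_twoSidedCoverage {φ : ℝ} (hφ : φ ∈ Ioc 0 π) :
    StrictMonoOn (twoSidedCoverage φ) (Ioi 0) := by
  intro v hv w hw hvw
  have hfirst : φ / π * chi2cdf (v ^ 2) < φ / π * chi2cdf (w ^ 2) :=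
    mul_lt_mul_of_pos_left (strictMono_chi2cdf (pow_lt_pow_left₀ hvw (le_of_lt hv) two_ne_zero))
      (div_pos hφ.1 pi_pos)
  have hsecond := monotoneOn_integral_chi2cdf_sq_div (c := fun θ => Real.cos (θ - φ / 2) ^ 2)
    (a := φ / 2) (b := π / 2) (by fun_prop) (fun _ => sq_nonneg _) (by linarith [hφ.2])
    (Ioi_subset_Ici_self hv) (Ioi_subset_Ici_self hw) hvw.le
  exact add_lt_add_of_lt_of_le hfirst
    (mul_le_mul_of_nonneg_left hsecond (div_nonneg zero_le_two pi_pos.le))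

lemma chi2cdf_sq_le_twoSidedCoverage {φ : ℝ} (hφ : φ ∈ Ioc 0 π) (w : ℝ) :
    chi2cdf (w ^ 2) ≤ twoSidedCoverage φ w := by
  have hintegral := mul_chi2cdf_sq_le_integral (c := fun θ => Real.cos (θ - φ / 2) ^ 2)
    (a := φ / 2) (b := π / 2) (by fun_prop) (fun _ => sq_nonneg _)
    (fun _ hθ => cos_sub_half_sq_mem_Ioc hφ.1 hθ) (by linarith [hφ.2]) w
  calc chi2cdf (w ^ 2)
      = φ / π * chi2cdf (w ^ 2) + 2 / π * ((π / 2 - φ / 2) * chi2cdf (w ^ 2)) := by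
        field_simp; ring
    _ ≤ twoSidedCoverage φ w := by unfold twoSidedCoverage; gcongr

lemma twoSidedCoverage_le_one {φ : ℝ} (hφ : φ ∈ Icc 0 π) (w : ℝ) :
    twoSidedCoverage φ w ≤ 1 := by
  have hintegral := integral_chi2cdf_sq_div_le (c := fun θ => Real.cos (θ - φ / 2) ^ 2)
    (a := φ / 2) (b := π / 2) (by fun_prop) (fun _ => sq_nonneg _) (by linarith [hφ.2]) w
  calc twoSidedCoverage φ w ≤ φ / π * 1 + 2 / π * (π / 2 - φ / 2) := by
        unfold twoSidedCoverage
        gcongr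
        · exact div_nonneg hφ.1 pi_pos.le
        · exact (chi2cdf_lt_one _).le
    _ = 1 := by field_simp; ring

lemma tendsto_twoSidedCoverage_atTop {φ : ℝ} (hφ : φ ∈ Ioc 0 π) :
    Tendsto (twoSidedCoverage φ) atTop (𝓝 1) :=
  tendsto_of_tendsto_of_tendsto_of_le_of_le
    (tendsto_chi2cdf_atTop.comp (tendsto_pow_atTop two_ne_zero)) tendsto_const_nhds
    (chi2cdf_sq_le_twoSidedCoverage hφ) (twoSidedCoverage_le_one (Ioc_subset_Icc_self hφ))

lemma existsUnique_mem_Ioi_eq_of_strictMonoOn {f : ℝ → ℝ} {a l u y : ℝ}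
    (hf : ContinuousOn f (Ioi a)) (hmono : StrictMonoOn f (Ioi a))
    (hl : Tendsto f (𝓝[>] a) (𝓝 l)) (hu : Tendsto f atTop (𝓝 u)) (hy : y ∈ Ioo l u) :
    ∃! w, w ∈ Ioi a ∧ f w = y := by
  obtain ⟨v, hfv, hv⟩ := ((hl.eventually_lt_const hy.1).and self_mem_nhdsWithin).exists
  obtain ⟨w, hfw, hvw⟩ := ((hu.eventually_const_lt hy.2).and (eventually_gt_atTop v)).exists
  have hsub : Icc v w ⊆ Ioi a := fun x hx => lt_of_lt_of_le hv hx.1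
  obtain ⟨x, hx, rfl⟩ := intermediate_value_Ioo hvw.le (hf.mono hsub) ⟨hfv, hfw⟩
  have hxa : x ∈ Ioi a := hsub (Ioo_subset_Icc_self hx)
  exact ⟨x, ⟨hxa, rfl⟩, fun x' hx' => hmono.injOn hx'.1 hxa hx'.2⟩

/-- For fixed `φ ∈ (0, π)`, the function
`g(w) = (φ/π)·F₂(w²) + (2/π)·∫_{φ/2}^{π/2} F₂( w²/cos²(θ - φ/2) ) dθ` is continuous and
strictly increasing on `(0, ∞)`, with `g(w) → 0` as `w → 0⁺` and `g(w) → 1` as `w → ∞`.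
Hence for every `α ∈ (0,1)` there is a unique critical value `w > 0` with `g(w) = 1 - α`. -/
theorem two_sided_critical_value_exists_unique (φ : ℝ) (hφ : φ ∈ Set.Ioo 0 π) :
    ContinuousOn (twoSidedCoverage φ) (Set.Ioi 0) ∧
    StrictMonoOn (twoSidedCoverage φ) (Set.Ioi 0) ∧
    Tendsto (twoSidedCoverage φ) (nhdsWithin 0 (Set.Ioi 0)) (nhds 0) ∧
    Tendsto (twoSidedCoverage φ) atTop (nhds 1) ∧
    ∀ α ∈ Set.Ioo (0 : ℝ) 1, ∃! w, w ∈ Set.Ioi (0 : ℝ) ∧ twoSidedCoverage φ w = 1 - α := by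
  have hcont := (continuous_twoSidedCoverage φ).continuousOn (s := Ioi 0)
  have hmono := strictMonoOn_twoSidedCoverage (Ioo_subset_Ioc_self hφ)
  have hzero := tendsto_twoSidedCoverage_nhdsGT_zero φ
  have hone := tendsto_twoSidedCoverage_atTop (Ioo_subset_Ioc_self hφ)
  exact ⟨hcont, hmono, hzero, hone, fun α hα =>
    existsUnique_mem_Ioi_eq_of_strictMonoOn hcont hmono hzero hone
      ⟨by linarith [hα.2], by linarith [hα.1]⟩⟩
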